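/- arXiv:1209.3927 — 2 statements merged into one kernel-verified Lean document; each statement's English description precedes it below -/
import Mathlib

section
/- The iterated palindromic closure map ψ is injective: if ψ(u) = ψ(v) for words u, v over a binary alphabet, then u = v. -/
def palClosure (w : List Bool) : List Bool :=
  let k := Nat.find (p := fun k => (w.drop k).reverse = w.drop k)
    ⟨w.length, by simp⟩
  w.take k ++ w.drop k ++ (w.take k).reverse

def psi (v : List Bool) : List Bool := v.foldl (fun w x => palClosure (w ++ [x])) []

def E (v : List Bool) : List Bool := v.map (!·)

def mu (x : Bool) (w : List Bool) : List Bool := w.flatMap (fun y => if y = x then [x] else [x, y])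

def muW : List Bool → List Bool → List Bool
  | [], w => w
  | x :: v, w => mu x (muW v w)

def vN (n : ℕ) : List Bool := (List.range n).map (fun i => decide (i % 2 = 1))

def fibF : ℕ → ℕ
  | 0 => 1
  | 1 => 1
  | n + 2 => fibF (n + 1) + fibF n

def HasPeriod (w : List Bool) (p : ℕ) : Prop :=
  0 < p ∧ ∀ i j (hi : i < w.length) (hj : j < w.length),
    i % p = j % p → w.get ⟨i, hi⟩ = w.get ⟨j, hj⟩

noncomputable def minPeriod (w : List Bool) : ℕ := sInf {p | HasPeriod w p}

def dOp : List Bool → List Bool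
  | x :: y :: u => y :: x :: u
  | w => w

def cOp (v : List Bool) : List Bool := (dOp v.reverse).reverse

def contAux : List ℕ → ℕ
  | [] => 1
  | [a] => a
  | a :: b :: t => a * contAux (b :: t) + contAux t

lemma psi_snoc (v : List Bool) (x : Bool) : psi (v ++ [x]) = palClosure (psi v ++ [x]) := by
  simp [psi, List.foldl_append]

lemma palClosure_ex (w : List Bool) : ∃ t, palClosure w = w ++ t := by
  simp only [palClosure]
  exact ⟨_, by rw [List.take_append_drop]⟩

lemma prefix_palClosure (w : List Bool) : w <+: palClosure w := by
  obtain ⟨t, ht⟩ := palClosure_ex w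
  exact ⟨t, ht.symm⟩

lemma psi_prefix_append (u t : List Bool) : psi u <+: psi (u ++ t) := by
  induction t using List.reverseRecOn with
  | nil => simp
  | append_singleton t x ih =>
      rw [← List.append_assoc, psi_snoc]
      exact ih.trans ((List.prefix_append _ _).trans (prefix_palClosure _))

lemma psi_take_prefix (u : List Bool) (i : ℕ) : psi (u.take i) <+: psi u := by
  have := psi_prefix_append (u.take i) (u.drop i)
  rwa [List.take_append_drop] at this

lemma length_lt_psi_snoc (v : List Bool) (x : Bool) :
    (psi v).length < (psi (v ++ [x])).length := by
  rw [psi_snoc]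
  have := (prefix_palClosure (psi v ++ [x])).length_le
  simp at this
  omega

lemma take_succ_eq (u : List Bool) (i : ℕ) (hi : i < u.length) :
    u.take (i + 1) = u.take i ++ [u.getD i false] := by
  rw [List.take_succ]
  simp [List.getD, List.getElem?_eq_getElem hi]

lemma length_psi_take_lt (u : List Bool) (i : ℕ) (hi : i < u.length) :
    (psi (u.take i)).length < (psi u).length := by
  have h1 : (psi (u.take i)).length < (psi (u.take (i + 1))).length := by
    rw [take_succ_eq u i hi]
    exact length_lt_psi_snoc _ _
  have h2 := (psi_take_prefix u (i + 1)).length_le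
  omega

lemma prefix_getD (l₁ l₂ : List Bool) (h : l₁ <+: l₂) (i : ℕ) (hi : i < l₁.length) :
    l₂.getD i false = l₁.getD i false := by
  obtain ⟨t, rfl⟩ := h
  rw [List.getD_append _ _ _ _ hi]

lemma psi_getD (u : List Bool) (i : ℕ) (hi : i < u.length) :
    (psi u).getD (psi (u.take i)).length false = u.getD i false := by
  have hpre : psi (u.take i) ++ [u.getD i false] <+: psi u := by
    have h1 : psi (u.take i) ++ [u.getD i false] <+: psi (u.take (i + 1)) := by
      rw [take_succ_eq u i hi, psi_snoc]
      exact prefix_palClosure _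
    exact h1.trans (psi_take_prefix u (i + 1))
  rw [prefix_getD _ _ hpre _ (by simp)]
  rw [List.getD_append_right _ _ _ _ (le_refl _)]
  simp

def g (P : List Bool) : ℕ → List Bool
  | 0 => []
  | i + 1 => palClosure (g P i ++ [P.getD (g P i).length false])

lemma g_psi (u : List Bool) : ∀ i, i ≤ u.length → g (psi u) i = psi (u.take i) := by
  intro i
  induction i with
  | zero => simp [g, psi]
  | succ i ih =>
      intro hi
      have hi' : i < u.length := by omega
      rw [g, ih (by omega), psi_getD u i hi', ← psi_snoc, ← take_succ_eq u i hi']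

lemma psi_len_le (u v : List Bool) (h : psi u = psi v) : u.length ≤ v.length := by
  by_contra hlt
  push_neg at hlt
  have h1 : g (psi u) v.length = psi (u.take v.length) := g_psi u _ (le_of_lt hlt)
  have h2 : g (psi u) v.length = psi v := by
    rw [h, g_psi v _ (le_refl _), List.take_length]
  have h3 := length_psi_take_lt u v.length hlt
  rw [← h1, h2, ← h] at h3
  omega

theorem stmt1 (u v : List Bool) (h : psi u = psi v) : u = v := by
  have hlen : u.length = v.length :=
    le_antisymm (psi_len_le u v h) (psi_len_le v u h.symm)
  apply List.ext_getElem hlen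
  intro i h1 h2
  have hu := psi_getD u i h1
  have hv := psi_getD v i h2
  have hg : psi (u.take i) = psi (v.take i) := by
    rw [← g_psi u i (le_of_lt h1), ← g_psi v i (le_of_lt h2), h]
  have h4 : v.getD i false = u.getD i false := by rw [← hv, ← hu, hg, h]
  rw [List.getD_eq_getElem u false h1, List.getD_eq_getElem v false h2] at h4
  exact h4.symm
end

section
/- For every word v over {a,b}, |ψ(v)| = |ψ(v~)|, where v~ is the reversal of v. -/
/-!
Justin's formula `ψ(x v) = μ_x(ψ(v)) x`, where `μ_x` puts an `x` in front of every `!x`, shows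
that the vector `(|ψ(v)|_false + 1, |ψ(v)|_true + 1)` is `M_{v₁} ⋯ M_{vₙ} (1, 1)` for two
unipotent `2 × 2` matrices `M_x`, so `|ψ(v)| + 2` is the sum of the entries of that product.
Each `M_x` is fixed by transposition followed by swapping the two letters, so reversing `v`
transforms the product in the same way, which preserves the sum of its entries.

Justin's formula comes from `(μ_x(u) x)⁺ = μ_x(u⁺) x`, and `μ_x(u)⁺ = μ_x(u⁺) x` when `u` ends
in `!x`: the right-hand side is a palindrome extending the word being closed, and it is the
shortest one because every nonempty palindromic suffix of that word is, up to a border letter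
`x`, the image under `μ_x` of a palindromic suffix of `u`.
-/

theorem List.head?_eq_getLast?_of_reverse_eq {α : Type*} {l : List α} (h : l.reverse = l) :
    l.head? = l.getLast? := by
  rw [← List.head?_reverse, h]

namespace PalClosure

/-- `w.drop (palSuffixIndex w)` is the longest palindromic suffix of `w`. -/
def palSuffixIndex (w : List Bool) : ℕ :=
  Nat.find (p := fun k => (w.drop k).reverse = w.drop k) ⟨w.length, by simp⟩

theorem reverse_drop_palSuffixIndex (w : List Bool) :
    (w.drop (palSuffixIndex w)).reverse = w.drop (palSuffixIndex w) :=
  Nat.find_spec (p := fun k => (w.drop k).reverse = w.drop k) ⟨w.length, by simp⟩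

theorem palSuffixIndex_le {w : List Bool} {i : ℕ} (h : (w.drop i).reverse = w.drop i) :
    palSuffixIndex w ≤ i :=
  Nat.find_min' _ h

theorem palSuffixIndex_lt_length {w : List Bool} (hw : w ≠ []) :
    palSuffixIndex w < w.length := by
  have hpos : 0 < w.length := List.length_pos_iff.mpr hw
  have hsingle : (w.drop (w.length - 1)).length = 1 := by simp; omega
  obtain ⟨a, ha⟩ := List.length_eq_one_iff.mp hsingle
  have := palSuffixIndex_le (w := w) (i := w.length - 1) (by rw [ha]; rfl)
  omega

theorem palClosure_eq_append (w : List Bool) :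
    palClosure w = w ++ (w.take (palSuffixIndex w)).reverse := by
  show w.take (palSuffixIndex w) ++ w.drop (palSuffixIndex w) ++ _ = _
  rw [List.take_append_drop]
  rfl

theorem length_palClosure (w : List Bool) :
    (palClosure w).length = w.length + palSuffixIndex w := by
  have : palSuffixIndex w ≤ w.length := palSuffixIndex_le (by simp)
  simp [palClosure_eq_append, this]

theorem reverse_palClosure (w : List Bool) : (palClosure w).reverse = palClosure w := by
  have hw : w.reverse = w.drop (palSuffixIndex w) ++ (w.take (palSuffixIndex w)).reverse := by
    conv_lhs => rw [← List.take_append_drop (palSuffixIndex w) w]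
    rw [List.reverse_append, reverse_drop_palSuffixIndex]
  rw [palClosure_eq_append, List.reverse_append, List.reverse_reverse, hw,
    ← List.append_assoc, List.take_append_drop]

theorem length_palClosure_le {w q : List Bool} (hq : q.reverse = q) (hwq : w <+: q) :
    (palClosure w).length ≤ q.length := by
  obtain ⟨t, rfl⟩ := hwq
  rw [length_palClosure, List.length_append, Nat.add_le_add_iff_left]
  by_contra! ht
  have htw : t.length ≤ w.length := ht.le.trans (palSuffixIndex_le (by simp))
  have hrev : w.reverse = w.drop t.length ++ t := by
    have := congrArg (List.drop t.length) hq
    rwa [List.reverse_append, List.drop_left' (by simp),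
      List.drop_append_of_le_length htw] at this
  have hpal : (w.drop t.length).reverse = w.drop t.length := by
    simpa [← List.reverse_drop, List.take_left'] using
      congrArg (List.take (w.length - t.length)) hrev
  exact ht.not_ge (palSuffixIndex_le hpal)

theorem eq_palClosure_of_length_eq {w q : List Bool} (hq : q.reverse = q) (hwq : w <+: q)
    (hlen : q.length = (palClosure w).length) : q = palClosure w := by
  obtain ⟨t, rfl⟩ := hwq
  rw [length_palClosure, List.length_append, Nat.add_left_cancel_iff] at hlen
  have hle : palSuffixIndex w ≤ w.length := palSuffixIndex_le (by simp)
  have ht : t.reverse = w.take (palSuffixIndex w) := by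
    have := congrArg (List.take t.length) hq
    rwa [List.reverse_append, List.take_left' (by simp),
      List.take_append_of_le_length (by omega), hlen] at this
  rw [palClosure_eq_append, ← ht, List.reverse_reverse]

theorem eq_palClosure {w q : List Bool} (hw : w ≠ []) (hq : q.reverse = q) (hwq : w <+: q)
    (hsuffix : ∀ s, s ≠ [] → s <:+ w → s.reverse = s →
      q.length + s.length ≤ 2 * w.length) :
    q = palClosure w := by
  refine eq_palClosure_of_length_eq hq hwq (le_antisymm ?_ (length_palClosure_le hq hwq))
  have hlt := palSuffixIndex_lt_length hw
  have := hsuffix _ (by simpa using hlt) (List.drop_suffix _ _) (reverse_drop_palSuffixIndex w)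
  rw [List.length_drop] at this
  rw [length_palClosure]
  omega

end PalClosure

open PalClosure

namespace Mu

variable (x : Bool)

@[simp]
theorem mu_nil : mu x [] = [] := rfl

@[simp]
theorem mu_cons (z : Bool) (w : List Bool) :
    mu x (z :: w) = x :: (if z = x then mu x w else z :: mu x w) := by
  by_cases h : z = x <;> simp [mu, h]

@[simp]
theorem mu_append (u w : List Bool) : mu x (u ++ w) = mu x u ++ mu x w := by
  simp [mu]

theorem count_mu_self (w : List Bool) : (mu x w).count x = w.length := by
  induction w with
  | nil => rfl
  | cons z w ih => cases z <;> cases x <;> simp_all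

theorem count_mu_not (w : List Bool) : (mu x w).count (!x) = w.count (!x) := by
  induction w with
  | nil => rfl
  | cons z w ih => cases z <;> cases x <;> simp_all

theorem length_mu (w : List Bool) : (mu x w).length = w.length + w.count (!x) := by
  induction w with
  | nil => rfl
  | cons z w ih => cases z <;> cases x <;> simp_all <;> omega

theorem mu_eq_nil_or_eq_cons (w : List Bool) : mu x w = [] ∨ ∃ r, mu x w = x :: r := by
  cases w <;> simp

/-- The decoding map of `mu x`: its blocks are `[x]` and `[x, !x]`. -/
def unmu : List Bool → List Bool
  | [] => []
  | [_] => [x]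
  | _ :: y :: r => if y = x then x :: unmu (y :: r) else y :: unmu r

theorem unmu_mu (w : List Bool) : unmu x (mu x w) = w := by
  induction w with
  | nil => rfl
  | cons z w ih =>
    by_cases hz : z = x
    · subst hz
      rcases mu_eq_nil_or_eq_cons z w with h | ⟨r, h⟩
      · rw [mu_cons, if_pos rfl, h, ← ih, h]
        rfl
      · rw [mu_cons, if_pos rfl, h, unmu, if_pos rfl, ← h, ih]
    · simp [hz, unmu, ih]

theorem mu_injective : Function.Injective (mu x) :=
  Function.LeftInverse.injective (unmu_mu x)

theorem reverse_mu_append_singleton (w : List Bool) :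
    (mu x w ++ [x]).reverse = mu x w.reverse ++ [x] := by
  induction w with
  | nil => rfl
  | cons z w ih =>
    have ih' : x :: (mu x w).reverse = mu x w.reverse ++ [x] := by simpa using ih
    by_cases hz : z = x
    · simp [hz, ← ih']
    · calc (mu x (z :: w) ++ [x]).reverse = (x :: (mu x w).reverse) ++ [z, x] := by simp [hz]
        _ = mu x (z :: w).reverse ++ [x] := by rw [ih']; simp [hz]

theorem reverse_mu_append_singleton_eq_iff {t : List Bool} :
    (mu x t ++ [x]).reverse = mu x t ++ [x] ↔ t.reverse = t := by
  rw [reverse_mu_append_singleton, List.append_left_inj, (mu_injective x).eq_iff]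

variable {x} in
theorem eq_mu_or_eq_not_cons_mu_of_suffix {r v : List Bool} (h : r <:+ mu x v) :
    (∃ t, t <:+ v ∧ r = mu x t) ∨ ∃ t, (!x) :: t <:+ v ∧ r = (!x) :: mu x t := by
  induction v with
  | nil => exact Or.inl ⟨[], List.suffix_refl _, List.eq_nil_of_suffix_nil h⟩
  | cons z v ih =>
    have lift : r <:+ mu x v → (∃ t, t <:+ z :: v ∧ r = mu x t) ∨
        ∃ t, (!x) :: t <:+ z :: v ∧ r = (!x) :: mu x t := fun h' => (ih h').imp
      (fun ⟨t, ht, e⟩ => ⟨t, ht.trans (List.suffix_cons z v), e⟩)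
      (fun ⟨t, ht, e⟩ => ⟨t, ht.trans (List.suffix_cons z v), e⟩)
    rw [mu_cons] at h
    rcases List.suffix_cons_iff.mp h with h | h
    · exact Or.inl ⟨z :: v, List.suffix_refl _, by rw [h, mu_cons]⟩
    by_cases hz : z = x
    · simp only [hz, if_true] at h
      exact lift h
    · simp only [hz, if_false] at h
      rcases List.suffix_cons_iff.mp h with h | h
      · have : z = !x := by cases z <;> cases x <;> simp_all
        exact Or.inr ⟨v, by rw [← this], by rw [h, this]⟩
      · exact lift h

theorem length_mu_le_of_suffix_of_reverse_eq {t u : List Bool} (ht : t <:+ u)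
    (hpal : t.reverse = t) :
    (mu x t).length ≤ (mu x (u.drop (palSuffixIndex u))).length := by
  have hlen := ht.length_le
  have hk : palSuffixIndex u ≤ u.length - t.length :=
    palSuffixIndex_le (by rw [← List.suffix_iff_eq_drop.mp ht]; exact hpal)
  have : t <:+ u.drop (palSuffixIndex u) :=
    List.suffix_of_suffix_length_le ht (List.drop_suffix _ _) (by simp; omega)
  exact (this.flatMap _).length_le

theorem length_mu_palClosure_add (u : List Bool) :
    (mu x (palClosure u)).length + (mu x (u.drop (palSuffixIndex u))).length
      = 2 * (mu x u).length := by
  have hsplit := List.take_append_drop (palSuffixIndex u) u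
  have hlen := congrArg List.length hsplit
  have hcount := congrArg (List.count (!x)) hsplit
  simp only [List.length_append, List.count_append] at hlen hcount
  simp only [palClosure_eq_append, mu_append, List.length_append, length_mu,
    List.length_reverse, List.count_reverse]
  omega

theorem palClosure_mu_append_self (u : List Bool) :
    palClosure (mu x u ++ [x]) = mu x (palClosure u) ++ [x] := by
  refine (eq_palClosure (by simp) ((reverse_mu_append_singleton_eq_iff x).2
    (reverse_palClosure u)) ?_ ?_).symm
  · rcases mu_eq_nil_or_eq_cons x (u.take (palSuffixIndex u)).reverse with h | ⟨r, h⟩ <;>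
      simp [palClosure_eq_append, h]
  intro s hs hsuf hpal
  rcases List.suffix_concat_iff.mp hsuf with rfl | ⟨s, rfl, hsuf'⟩
  · exact absurd rfl hs
  rcases eq_mu_or_eq_not_cons_mu_of_suffix hsuf' with ⟨t, ht, rfl⟩ | ⟨t, -, rfl⟩
  · have := length_mu_le_of_suffix_of_reverse_eq x ht
      ((reverse_mu_append_singleton_eq_iff x).1 hpal)
    have := length_mu_palClosure_add x u
    simp only [List.length_append, List.length_singleton]
    omega
  · have := List.head?_eq_getLast?_of_reverse_eq hpal
    rw [List.getLast?_concat] at this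
    simp at this

theorem palClosure_mu_append_not (w : List Bool) :
    palClosure (mu x (w ++ [!x])) = mu x (palClosure (w ++ [!x])) ++ [x] := by
  set u := w ++ [!x]
  refine (eq_palClosure (by simp [u]) ((reverse_mu_append_singleton_eq_iff x).2
    (reverse_palClosure u)) (by simp [palClosure_eq_append]) ?_).symm
  intro s hs hsuf hpal
  have hlast : s.getLast? = some (!x) := by
    have hmu : mu x u = (mu x w ++ [x]) ++ [!x] := by simp [u]
    rcases List.suffix_concat_iff.mp (hmu ▸ hsuf) with rfl | ⟨s, rfl, -⟩
    · exact absurd rfl hs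
    · simp
  rcases eq_mu_or_eq_not_cons_mu_of_suffix hsuf with ⟨t, -, rfl⟩ | ⟨t, ht, rfl⟩
  · rcases mu_eq_nil_or_eq_cons x t with h | ⟨r, h⟩
    · exact absurd h hs
    · have := List.head?_eq_getLast?_of_reverse_eq hpal
      rw [hlast, h] at this
      simp at this
  -- a palindromic suffix `!x :: mu x t` of `mu x u` comes from the palindromic suffix `!x :: t`
  · have htpal : ((!x) :: t).reverse = (!x) :: t := by
      refine (reverse_mu_append_singleton_eq_iff x).1 ?_
      simpa using congrArg (fun l => x :: (l ++ [x])) hpal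
    have := length_mu_le_of_suffix_of_reverse_eq x ht htpal
    have := length_mu_palClosure_add x u
    have : (mu x ((!x) :: t)).length = (mu x t).length + 2 := by simp
    simp only [List.length_cons, List.length_append, List.length_nil]
    omega

end Mu

open Mu

theorem psi_append_singleton (v : List Bool) (y : Bool) :
    psi (v ++ [y]) = palClosure (psi v ++ [y]) := by
  simp [psi, List.foldl_append]

/-- Justin's formula. -/
theorem psi_cons (x : Bool) (v : List Bool) : psi (x :: v) = mu x (psi v) ++ [x] := by
  induction v using List.reverseRecOn with
  | nil =>
    have hnil : palClosure [] = [] := by simp [palClosure_eq_append]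
    have := palClosure_mu_append_self x []
    rw [mu_nil, List.nil_append, hnil] at this
    rw [← List.nil_append [x], psi_append_singleton]
    simpa [psi] using this
  | append_singleton v y ih =>
    rw [← List.cons_append, psi_append_singleton, ih, psi_append_singleton]
    rcases Bool.eq_or_eq_not y x with rfl | rfl
    · simpa using palClosure_mu_append_self y (psi v ++ [y])
    · simpa using palClosure_mu_append_not x (psi v)

open Matrix

/-- By Justin's formula, `letterMatrix x` maps the letter counts (each plus one) of `psi v` to
those of `psi (x :: v)`. -/
def letterMatrix (x : Bool) : Matrix Bool Bool ℕ :=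
  Matrix.of fun b b' => if b = x ∨ b = b' then 1 else 0

def letterMatrixProd (v : List Bool) : Matrix Bool Bool ℕ := (v.map letterMatrix).prod

theorem count_psi_cons (x : Bool) (v : List Bool) (b : Bool) :
    (psi (x :: v)).count b = if b = x then (psi v).length + 1 else (psi v).count b := by
  rw [psi_cons]
  split_ifs with hb
  · simp [hb, count_mu_self]
  · obtain rfl : b = !x := by cases b <;> cases x <;> simp_all
    simp [count_mu_not]

theorem count_psi_add_one_eq_mulVec (v : List Bool) :
    (fun b => (psi v).count b + 1) = letterMatrixProd v *ᵥ 1 := by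
  induction v with
  | nil => funext b; simp [psi, letterMatrixProd]
  | cons x v ih =>
    rw [letterMatrixProd, List.map_cons, List.prod_cons, ← mulVec_mulVec, ← letterMatrixProd,
      ← ih]
    funext b
    have := List.count_false_add_count_true (psi v)
    cases b <;> cases x <;>
      simp [count_psi_cons, letterMatrix, mulVec, dotProduct] <;> omega

theorem length_psi_add_two (v : List Bool) :
    (psi v).length + 2 = ∑ b, ∑ b', letterMatrixProd v b b' := by
  have hcount := congrFun (count_psi_add_one_eq_mulVec v)
  have hfalse := hcount false
  have htrue := hcount true
  simp only [mulVec, dotProduct, Pi.one_apply, mul_one, Fintype.sum_bool] at hfalse htrue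
  have := List.count_false_add_count_true (psi v)
  simp only [Fintype.sum_bool]
  omega

theorem letterMatrixProd_reverse (v : List Bool) :
    letterMatrixProd v.reverse = (letterMatrixProd v)ᵀ.submatrix Equiv.boolNot Equiv.boolNot := by
  induction v with
  | nil => simp [letterMatrixProd, submatrix_one_equiv]
  | cons x v ih =>
    have hx : (letterMatrix x)ᵀ.submatrix Equiv.boolNot Equiv.boolNot = letterMatrix x := by
      ext b b'; cases b <;> cases b' <;> cases x <;> rfl
    have hcons : letterMatrixProd (x :: v) = letterMatrix x * letterMatrixProd v := by
      simp [letterMatrixProd]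
    have hsnoc :
        letterMatrixProd (v.reverse ++ [x]) = letterMatrixProd v.reverse * letterMatrix x := by
      simp [letterMatrixProd]
    rw [List.reverse_cons, hsnoc, ih, hcons, transpose_mul,
      ← submatrix_mul_equiv _ _ _ Equiv.boolNot, hx]

theorem sum_transpose_submatrix {n α : Type*} [Fintype n] [AddCommMonoid α] (A : Matrix n n α)
    (e : n ≃ n) : ∑ i, ∑ j, (Aᵀ.submatrix e e) i j = ∑ i, ∑ j, A i j := by
  simp only [submatrix_apply, transpose_apply]
  rw [Finset.sum_comm]
  exact Fintype.sum_equiv e _ _ (fun i => Fintype.sum_equiv e _ _ (fun _ => rfl))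

theorem stmt5 (v : List Bool) : (psi v).length = (psi v.reverse).length := by
  have h := length_psi_add_two v
  have h' := length_psi_add_two v.reverse
  rw [letterMatrixProd_reverse, sum_transpose_submatrix] at h'
  omega
end
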